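/- arXiv:2504.06466 — 5 statements merged into one kernel-verified Lean document; each statement's English description precedes it below -/
import Mathlib

section
/- For n ≥ 1, the number of weakly increasing Fubini rankings of length n equals 2^(n-1). -/
/-!
A weakly increasing tuple is cut into blocks of equal entries, and the Fubini condition says
exactly that every entry equals the position at which its block starts. So such a ranking is
determined by the set of positions `2, …, n` where a new block starts (position `1` always does),
and any such set occurs, giving `2 ^ (n - 1)` rankings.
-/

/-- A Fubini ranking of length `n`: entries in `{1,...,n}` and every value `v`
appearing satisfies `v = 1 + #{j : r_j < v}`. -/
def IsFubini (n : ℕ) (l : List ℕ) : Prop :=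
  l.length = n ∧ (∀ x ∈ l, 1 ≤ x ∧ x ≤ n) ∧
    ∀ v ∈ l, v = 1 + l.countP (fun x => decide (x < v))

/-- Split a list (with given head) into maximal runs w.r.t. relation `R`. -/
def runsAux (R : ℕ → ℕ → Bool) : ℕ → List ℕ → List (List ℕ)
  | a, [] => [[a]]
  | a, b :: l =>
    match runsAux R b l with
    | (c :: r) :: rest =>
        if R a b then (a :: c :: r) :: rest else [a] :: (c :: r) :: rest
    | rs => [a] :: rs

/-- The maximal runs of a list with respect to the relation `R`. -/
def runs (R : ℕ → ℕ → Bool) : List ℕ → List (List ℕ)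
  | [] => []
  | a :: l => runsAux R a l

/-- Maximal runs of weak ascents. -/
def weakRuns (l : List ℕ) : List (List ℕ) := runs (fun a b => decide (a ≤ b)) l

/-- Maximal runs of strict ascents. -/
def strictRuns (l : List ℕ) : List (List ℕ) := runs (fun a b => decide (a < b)) l

/-- Leading terms of a list of runs. -/
def leadingTerms (rs : List (List ℕ)) : List ℕ := rs.map List.headI

/-- Weakly flattened w.r.t. runs of weak ascents. -/
def WeaklyFlattenedWeak (l : List ℕ) : Prop :=
  (leadingTerms (weakRuns l)).Chain' (· ≤ ·)

/-- Flattened w.r.t. runs of weak ascents. -/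
def FlattenedWeak (l : List ℕ) : Prop :=
  (leadingTerms (weakRuns l)).Chain' (· < ·)

/-- Weakly flattened w.r.t. runs of strict ascents. -/
def WeaklyFlattenedStrict (l : List ℕ) : Prop :=
  (leadingTerms (strictRuns l)).Chain' (· ≤ ·)

/-- Flattened w.r.t. runs of strict ascents. -/
def FlattenedStrict (l : List ℕ) : Prop :=
  (leadingTerms (strictRuns l)).Chain' (· < ·)

/-- The content `(c_1, ..., c_n)` of a tuple of length `n`: `c_i` is the number
of entries equal to `i`. -/
def content (l : List ℕ) : List ℕ :=
  (List.range l.length).map (fun i => l.count (i + 1))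

/-- The reduced content: multiplicities of the distinct values, in increasing
order of the values. -/
def reducedContent (l : List ℕ) : List ℕ :=
  (l.toFinset.sort (· ≤ ·)).map (fun v => l.count v)

/-- `a_1` copies of `1`, then `a_2` copies of `1 + a_1`, etc. (auxiliary). -/
def stairsAux : ℕ → List ℕ → List ℕ
  | _, [] => []
  | s, c :: rest => List.replicate c (s + 1) ++ stairsAux (s + c) rest

/-- The weakly increasing tuple with reduced content `a`. -/
def stairs (a : List ℕ) : List ℕ := stairsAux 0 a

/-- `ofBlockStarts prev pos bs` is the tail, from position `pos` on, of a weakly increasing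
ranking whose entry before position `pos` is `prev`: bit `true` starts a new block at the
current position, bit `false` repeats the previous entry. -/
def ofBlockStarts : ℕ → ℕ → List Bool → List ℕ
  | _, _, [] => []
  | prev, pos, b :: bs =>
      (if b then pos else prev) :: ofBlockStarts (if b then pos else prev) (pos + 1) bs

@[simp]
lemma length_ofBlockStarts (prev pos : ℕ) (bs : List Bool) :
    (ofBlockStarts prev pos bs).length = bs.length := by
  induction bs generalizing prev pos <;> simp [ofBlockStarts, *]

lemma ofBlockStarts_injective {prev pos : ℕ} (h : prev < pos) :
    Function.Injective (ofBlockStarts prev pos) := by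
  intro bs bs' heq
  induction bs generalizing prev pos bs' with
  | nil => cases bs' <;> simp_all [ofBlockStarts]
  | cons b bs ih =>
    cases bs' with
    | nil => simp [ofBlockStarts] at heq
    | cons b' bs' =>
      simp only [ofBlockStarts, List.cons.injEq] at heq
      obtain rfl : b = b' := by cases b <;> cases b' <;> simp_all
      rw [ih (by split <;> omega) heq.2]

lemma cons_mem_range_ofBlockStarts_iff {prev pos x : ℕ} {t : List ℕ} :
    x :: t ∈ Set.range (ofBlockStarts prev pos) ↔
      (x = pos ∨ x = prev) ∧ t ∈ Set.range (ofBlockStarts x (pos + 1)) := by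
  constructor
  · rintro ⟨_ | ⟨b, bs⟩, heq⟩
    · simp [ofBlockStarts] at heq
    · simp only [ofBlockStarts, List.cons.injEq] at heq
      obtain ⟨rfl, rfl⟩ := heq
      exact ⟨by split <;> simp, bs, rfl⟩
  · rintro ⟨rfl | rfl, bs, rfl⟩
    exacts [⟨true :: bs, rfl⟩, ⟨false :: bs, rfl⟩]

lemma countP_lt_cons_of_isChain {x v : ℕ} {t : List ℕ} (h : (x :: t).IsChain (· ≤ ·)) :
    (x :: t).countP (· < v) = if x < v then t.countP (· < v) + 1 else 0 := by
  split_ifs with hxv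
  · simp [hxv]
  · refine List.countP_eq_zero.2 fun y hy => ?_
    have : x ≤ y := by rcases List.mem_cons.1 hy with rfl | hy; exacts [le_rfl, h.rel_cons hy]
    simp only [decide_eq_true_eq]
    omega

/-- The counting condition is the Fubini condition for the entries of `t` placed at positions
`pos, pos + 1, …` behind `pos - 1` entries that are all at most `prev`. -/
lemma mem_range_ofBlockStarts_iff {prev pos : ℕ} {t : List ℕ} (h : prev < pos) :
    t ∈ Set.range (ofBlockStarts prev pos) ↔
      (prev :: t).IsChain (· ≤ ·) ∧ ∀ v ∈ t, prev < v → t.countP (· < v) + pos = v := by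
  induction t generalizing prev pos with
  | nil => exact ⟨fun _ => by simp, fun _ => ⟨[], rfl⟩⟩
  | cons x t ih =>
    rw [cons_mem_range_ofBlockStarts_iff]
    constructor
    · rintro ⟨hx, hrest⟩
      obtain ⟨hchain, hcount⟩ := (ih (by omega)).1 hrest
      refine ⟨List.isChain_cons_cons.2 ⟨by omega, hchain⟩, fun v hv hpv => ?_⟩
      rw [countP_lt_cons_of_isChain hchain]
      rcases List.mem_cons.1 hv with rfl | hv
      · rw [if_neg (lt_irrefl v)]; omega
      · split_ifs with hxv
        · have := hcount v hv hxv; omega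
        · have := hchain.rel_cons hv; omega
    · rintro ⟨hchain, hcount⟩
      obtain ⟨hpx, hchain⟩ := List.isChain_cons_cons.1 hchain
      have hx : x = pos ∨ x = prev := by
        rcases hpx.eq_or_lt with h | h
        · exact Or.inr h.symm
        · have := hcount x List.mem_cons_self h
          rw [countP_lt_cons_of_isChain hchain, if_neg (lt_irrefl x)] at this
          omega
      refine ⟨hx, (ih (by omega)).2 ⟨hchain, fun v hv hxv => ?_⟩⟩
      have := hcount v (List.mem_cons_of_mem x hv) (by omega)
      rw [countP_lt_cons_of_isChain hchain, if_pos hxv] at this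
      omega

lemma isFubini_iff {n : ℕ} {l : List ℕ} :
    IsFubini n l ↔ l.length = n ∧ ∀ v ∈ l, v = 1 + l.countP (· < v) := by
  refine ⟨fun h => ⟨h.1, h.2.2⟩, fun ⟨hlen, h⟩ => ⟨hlen, fun x hx => ⟨?_, ?_⟩, h⟩⟩
  · rw [h x hx]; omega
  · have : l.countP (· < x) < l.length := List.countP_lt_length_iff.2 ⟨x, hx, by simp⟩
    rw [h x hx]; omega

lemma fubini_cons_iff_of_isChain {a : ℕ} {t : List ℕ} (h : (a :: t).IsChain (· ≤ ·)) :
    (∀ v ∈ a :: t, v = 1 + (a :: t).countP (· < v)) ↔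
      a = 1 ∧ ∀ v ∈ t, 1 < v → t.countP (· < v) + 2 = v := by
  simp only [countP_lt_cons_of_isChain h]
  constructor
  · intro hf
    have ha : a = 1 := by simpa using hf a List.mem_cons_self
    subst ha
    refine ⟨rfl, fun v hv hv1 => ?_⟩
    have := hf v (List.mem_cons_of_mem 1 hv)
    rw [if_pos hv1] at this
    omega
  · rintro ⟨rfl, hcount⟩ v hv
    rcases List.mem_cons.1 hv with rfl | hv
    · simp
    · split_ifs with hv1
      · have := hcount v hv hv1; omega
      · have := h.rel_cons hv; omega

lemma isFubini_and_isChain_iff {n : ℕ} (hn : 1 ≤ n) {l : List ℕ} :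
    IsFubini n l ∧ l.IsChain (· ≤ ·) ↔
      ∃ bs : List.Vector Bool (n - 1), 1 :: ofBlockStarts 1 2 bs.toList = l := by
  rw [isFubini_iff]
  constructor
  · rintro ⟨⟨hlen, hcount⟩, hchain⟩
    obtain _ | ⟨a, t⟩ := l
    · simp only [List.length_nil] at hlen; omega
    obtain ⟨rfl, hcond⟩ := (fubini_cons_iff_of_isChain hchain).1 hcount
    obtain ⟨bs, rfl⟩ := (mem_range_ofBlockStarts_iff one_lt_two).2 ⟨hchain, hcond⟩
    simp only [List.length_cons, length_ofBlockStarts] at hlen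
    exact ⟨⟨bs, by omega⟩, rfl⟩
  · rintro ⟨⟨bs, hlen⟩, rfl⟩
    obtain ⟨hchain, hcond⟩ := (mem_range_ofBlockStarts_iff one_lt_two).1 ⟨bs, rfl⟩
    refine ⟨⟨?_, (fubini_cons_iff_of_isChain hchain).2 ⟨rfl, hcond⟩⟩, hchain⟩
    simp only [List.Vector.toList_mk, List.length_cons, length_ofBlockStarts]
    omega

theorem weakly_increasing_fubini_count (n : ℕ) (hn : 1 ≤ n) :
    {l : List ℕ | IsFubini n l ∧ l.Chain' (· ≤ ·)}.ncard = 2 ^ (n - 1) := by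
  set f : List.Vector Bool (n - 1) → List ℕ := fun bs => 1 :: ofBlockStarts 1 2 bs.toList
  have hrange : {l : List ℕ | IsFubini n l ∧ l.Chain' (· ≤ ·)} = Set.range f :=
    Set.ext fun _ => isFubini_and_isChain_iff hn
  have hinj : f.Injective := fun bs bs' heq =>
    List.Vector.toList_injective (ofBlockStarts_injective one_lt_two (List.cons_injective heq))
  rw [hrange, Set.ncard_range_of_injective hinj, Nat.card_eq_fintype_card, card_vector,
    Fintype.card_bool]
end

section
/- For every composition a = (a_1,...,a_k) of n with all parts positive, there exists a Fubini ranking of length n whose reduced content equals a; concretely, the weakly increasing tuple consisting of a_1 copies of 1, then a_2 copies of 1+a_1, and in general a_j copies of 1+a_1+...+a_{j-1}, is a Fubini ranking with reduced content a. -/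
/-! The block of value `s + 1` in `stairsAux s a` is preceded by no smaller entry, and every later
block of value `v` is preceded by exactly `v - s - 1` smaller entries; this is the Fubini condition.
Positive parts make the block values distinct and increasing, so the reduced content is `a`. -/

lemma stairsAux_cons (s c : ℕ) (a : List ℕ) :
    stairsAux s (c :: a) = List.replicate c (s + 1) ++ stairsAux (s + c) a := rfl

lemma length_stairsAux (s : ℕ) (a : List ℕ) : (stairsAux s a).length = a.sum := by
  induction a generalizing s with
  | nil => rfl
  | cons c a ih => simp [stairsAux_cons, ih]

lemma lt_of_mem_stairsAux {s x : ℕ} {a : List ℕ} (hx : x ∈ stairsAux s a) : s < x := by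
  induction a generalizing s with
  | nil => simp [stairsAux] at hx
  | cons c a ih =>
    rcases List.mem_append.1 hx with hx | hx
    · rw [List.eq_of_mem_replicate hx]; omega
    · have := ih hx; omega

lemma le_of_mem_stairsAux {s x : ℕ} {a : List ℕ} (hx : x ∈ stairsAux s a) : x ≤ s + a.sum := by
  induction a generalizing s with
  | nil => simp [stairsAux] at hx
  | cons c a ih =>
    rw [List.sum_cons]
    rcases List.mem_append.1 hx with hx | hx
    · obtain ⟨hc, rfl⟩ := List.mem_replicate.1 hx
      omega
    · have := ih hx; omega

lemma eq_countP_lt_of_mem_stairsAux {s v : ℕ} {a : List ℕ} (hv : v ∈ stairsAux s a) :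
    v = s + 1 + (stairsAux s a).countP (· < v) := by
  induction a generalizing s with
  | nil => simp [stairsAux] at hv
  | cons c a ih =>
    rw [stairsAux_cons, List.countP_append, List.countP_replicate]
    rcases List.mem_append.1 hv with hv | hv
    · obtain rfl := List.eq_of_mem_replicate hv
      have hnone : (stairsAux (s + c) a).countP (· < s + 1) = 0 :=
        List.countP_eq_zero.2 fun x hx => by have := lt_of_mem_stairsAux hx; simp; omega
      rw [hnone]
      simp
    · have hsv : s + c < v := lt_of_mem_stairsAux hv
      have := ih hv
      simp only [decide_eq_true_eq]
      split_ifs <;> omega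

lemma reducedContent_replicate_append {v c : ℕ} {l : List ℕ} (hc : 0 < c)
    (hl : ∀ x ∈ l, v < x) :
    reducedContent (List.replicate c v ++ l) = c :: reducedContent l := by
  have hv : v ∉ l.toFinset := fun h => (hl v (List.mem_toFinset.1 h)).false
  have hsort : (List.replicate c v ++ l).toFinset.sort (· ≤ ·) = v :: l.toFinset.sort (· ≤ ·) := by
    rw [List.toFinset_append, List.toFinset_replicate_of_ne_zero hc.ne', Finset.singleton_union,
      Finset.sort_insert _ _ hv]
    exact fun x hx => (hl x (List.mem_toFinset.1 hx)).le
  rw [reducedContent, hsort, List.map_cons, reducedContent]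
  congr 1
  · simp [List.count_eq_zero_of_not_mem (List.mem_toFinset.not.1 hv)]
  · refine List.map_congr_left fun x hx => ?_
    have hvx := hl x (List.mem_toFinset.1 ((Finset.mem_sort _).1 hx))
    simp [List.count_replicate, hvx.ne]

lemma reducedContent_stairsAux {a : List ℕ} (ha : ∀ x ∈ a, 0 < x) (s : ℕ) :
    reducedContent (stairsAux s a) = a := by
  induction a generalizing s with
  | nil => simp [stairsAux, reducedContent]
  | cons c a ih =>
    have hc : 0 < c := ha c List.mem_cons_self
    have hlater : ∀ x ∈ stairsAux (s + c) a, s + 1 < x := fun x hx => by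
      have := lt_of_mem_stairsAux hx; omega
    rw [stairsAux_cons, reducedContent_replicate_append hc hlater,
      ih fun x hx => ha x (List.mem_cons_of_mem c hx)]

theorem stairs_isFubini_reducedContent (n : ℕ) (a : List ℕ)
    (ha : ∀ x ∈ a, 0 < x) (hsum : a.sum = n) :
    IsFubini n (stairs a) ∧ reducedContent (stairs a) = a := by
  subst hsum
  refine ⟨⟨length_stairsAux 0 a, fun x hx => ⟨lt_of_mem_stairsAux hx, ?_⟩, fun v hv => ?_⟩,
    reducedContent_stairsAux ha 0⟩
  · simpa using le_of_mem_stairsAux hx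
  · simpa [stairs] using eq_countP_lt_of_mem_stairsAux hv
end

section
/- In a weakly flattened Fubini ranking with runs of weak ascents, any run consisting of a single element must be the final run of the sequence. -/
/-! Consecutive weak-ascent runs are separated by a strict descent, so a run `[x]` followed by
another run has leading term `x` strictly larger than the next leading term, which weak
flattening forbids. -/

section Runs

variable (R : ℕ → ℕ → Bool)

theorem exists_runsAux_eq_cons (a : ℕ) (l : List ℕ) :
    ∃ c rest, runsAux R a l = (a :: c) :: rest := by
  induction l generalizing a with
  | nil => exact ⟨[], [], rfl⟩
  | cons b l ih =>
    obtain ⟨c, rest, h⟩ := ih b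
    by_cases hab : R a b
    · exact ⟨b :: c, rest, by simp [runsAux, h, hab]⟩
    · exact ⟨[], (b :: c) :: rest, by simp [runsAux, h, hab]⟩

theorem isChain_runsAux (a : ℕ) (l : List ℕ) :
    (runsAux R a l).IsChain (fun r s => R (r.getLastD 0) s.headI = false) := by
  induction l generalizing a with
  | nil => exact List.IsChain.singleton _
  | cons b l ih =>
    obtain ⟨c, rest, h⟩ := exists_runsAux_eq_cons R b l
    have ih' := ih b
    rw [h] at ih'
    by_cases hab : R a b
    · simp only [runsAux, h, hab, if_true]
      cases rest with
      | nil => exact List.IsChain.singleton _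
      | cons s rest =>
        rw [List.isChain_cons_cons] at ih' ⊢
        simpa [List.getLastD_cons] using ih'
    · simp only [runsAux, h, hab, if_false, Bool.false_eq_true]
      exact List.isChain_cons_cons.mpr ⟨by simpa using hab, ih'⟩

theorem isChain_runs (l : List ℕ) :
    (runs R l).IsChain (fun r s => R (r.getLastD 0) s.headI = false) := by
  cases l with
  | nil => exact List.IsChain.nil
  | cons a l => exact isChain_runsAux R a l

end Runs

theorem isChain_weakRuns (l : List ℕ) :
    (weakRuns l).IsChain (fun r s => s.headI < r.getLastD 0) :=
  (isChain_runs _ l).imp fun r s h => by simpa using h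

theorem singleton_run_is_last_general (l : List ℕ)
    (hw : WeaklyFlattenedWeak l) (i : ℕ) (hi : i < (weakRuns l).length)
    (h1 : ((weakRuns l)[i]).length = 1) :
    i = (weakRuns l).length - 1 := by
  by_contra hne
  have hnext : i + 1 < (weakRuns l).length := by omega
  obtain ⟨x, hx⟩ := List.length_eq_one_iff.mp h1
  have hdescent := List.isChain_iff_getElem.mp (isChain_weakRuns l) i hnext
  have hflat := List.isChain_iff_getElem.mp hw i (by simpa [leadingTerms] using hnext)
  simp only [leadingTerms, List.getElem_map, hx] at hdescent hflat
  simp only [List.headI, List.getLastD_cons, List.getLastD_nil] at hdescent hflat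
  omega

theorem singleton_run_is_last (n : ℕ) (l : List ℕ) (hf : IsFubini n l)
    (hw : WeaklyFlattenedWeak l) (i : ℕ) (hi : i < (weakRuns l).length)
    (h1 : ((weakRuns l)[i]).length = 1) :
    i = (weakRuns l).length - 1 :=
  singleton_run_is_last_general l hw i hi h1
end

section
/- For n ≥ 1 and k ≥ 1, there exists a flattened Fubini ranking of length n with exactly k runs of weak ascents if and only if k ≤ ⌈n/2⌉. -/
/-!
Upper bound: every run but the last ends strictly above the lead of the next run, so a singleton
run `[x]` followed by another run would have its lead `x` above the next lead, contradicting
flatness. Hence all runs but the last have at least two elements and `n ≥ 2k - 1`.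

Lower bound: permutations of `1, …, n` are Fubini rankings. Starting from `[1]`, the map
`l ↦ 1, n + 2, l + 1` puts a new run `[1, n + 2]` in front of the shifted runs of `l`, and
`l ↦ 1, l + 1` lengthens the first run; both keep the leads increasing.
-/

lemma runsAux_eq_cons (R : ℕ → ℕ → Bool) (a : ℕ) (l : List ℕ) :
    ∃ t rest, runsAux R a l = (a :: t) :: rest := by
  induction l generalizing a with
  | nil => exact ⟨[], [], rfl⟩
  | cons b l ih =>
    obtain ⟨t, rest, h⟩ := ih b
    by_cases hab : R a b
    · exact ⟨b :: t, rest, by simp [runsAux, h, hab]⟩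
    · exact ⟨[], (b :: t) :: rest, by simp [runsAux, h, hab]⟩

namespace List

lemma isChain_one_cons_map_add_one {L : List ℕ} (hL : L.IsChain (· < ·))
    (hpos : ∀ x ∈ L.head?, 0 < x) : (1 :: L.map (· + 1)).IsChain (· < ·) := by
  rw [isChain_cons, isChain_map, head?_map]
  refine ⟨?_, hL.imp fun _ _ h => by omega⟩
  simpa using hpos

lemma countP_lt_range'_one (n v : ℕ) :
    (range' 1 n).countP (fun x => decide (x < v)) = min n (v - 1) := by
  induction n with
  | zero => simp
  | succ n ih =>
    rw [range'_concat, countP_append, ih]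
    simp only [countP_singleton, decide_eq_true_eq]
    split_ifs <;> omega

end List

open List

lemma flattenedWeak_iff {l : List ℕ} :
    FlattenedWeak l ↔ (leadingTerms (weakRuns l)).IsChain (· < ·) :=
  Iff.rfl

lemma leadingTerms_weakRuns_cons_cons_of_le {a b : ℕ} (t : List ℕ) (hab : a ≤ b) :
    leadingTerms (weakRuns (a :: b :: t)) = a :: (leadingTerms (weakRuns (b :: t))).tail := by
  obtain ⟨u, rest, h⟩ := runsAux_eq_cons (fun a b => decide (a ≤ b)) b t
  simp [weakRuns, runs, runsAux, h, hab, leadingTerms]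

lemma leadingTerms_weakRuns_cons_cons_of_lt {a b : ℕ} (t : List ℕ) (hba : b < a) :
    leadingTerms (weakRuns (a :: b :: t)) = a :: leadingTerms (weakRuns (b :: t)) := by
  obtain ⟨u, rest, h⟩ := runsAux_eq_cons (fun a b => decide (a ≤ b)) b t
  simp [weakRuns, runs, runsAux, h, Nat.not_le.2 hba, leadingTerms]

lemma leadingTerms_weakRuns_map {f : ℕ → ℕ} (hf : StrictMono f) :
    ∀ l : List ℕ, leadingTerms (weakRuns (l.map f)) = (leadingTerms (weakRuns l)).map f
  | [] => rfl
  | [a] => rfl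
  | a :: b :: t => by
    have ih := leadingTerms_weakRuns_map hf (b :: t)
    simp only [map_cons] at ih ⊢
    rcases le_or_gt a b with hab | hba
    · rw [leadingTerms_weakRuns_cons_cons_of_le _ hab,
        leadingTerms_weakRuns_cons_cons_of_le _ (hf.monotone hab), ih, map_cons, map_tail]
    · rw [leadingTerms_weakRuns_cons_cons_of_lt _ hba,
        leadingTerms_weakRuns_cons_cons_of_lt _ (hf hba), ih, map_cons]

lemma leadingTerms_weakRuns_cons (a : ℕ) (t : List ℕ) :
    ∃ M, leadingTerms (weakRuns (a :: t)) = a :: M := by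
  obtain ⟨u, rest, h⟩ := runsAux_eq_cons (fun a b => decide (a ≤ b)) a t
  exact ⟨rest.map headI, by simp [weakRuns, runs, h, leadingTerms]⟩

lemma length_leadingTerms (rs : List (List ℕ)) : (leadingTerms rs).length = rs.length :=
  length_map _

/- The first conjunct, where the first lead may break the chain, is what the induction needs when
the first run has at least two elements. -/
lemma two_mul_length_weakRuns_le : ∀ l : List ℕ,
    ((leadingTerms (weakRuns l)).tail.IsChain (· < ·) →
      2 * (weakRuns l).length ≤ l.length + 2) ∧
    (FlattenedWeak l → 2 * (weakRuns l).length ≤ l.length + 1)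
  | [] => by simp [weakRuns, runs]
  | [a] => by simp [weakRuns, runs, runsAux]
  | a :: b :: t => by
    obtain ⟨ihTail, ihFlat⟩ := two_mul_length_weakRuns_le (b :: t)
    obtain ⟨M, hM⟩ := leadingTerms_weakRuns_cons b t
    simp only [flattenedWeak_iff, ← length_leadingTerms, hM, tail_cons, length_cons]
      at ihTail ihFlat ⊢
    rcases le_or_gt a b with hab | hba
    · rw [leadingTerms_weakRuns_cons_cons_of_le _ hab, hM]
      simp only [tail_cons, length_cons]
      exact ⟨fun h => by have := ihTail h; omega,
        fun h => by have := ihTail (isChain_cons.1 h).2; omega⟩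
    · rw [leadingTerms_weakRuns_cons_cons_of_lt _ hba, hM, length_cons, length_cons]
      refine ⟨fun h => by have := ihFlat h; omega, fun h => ?_⟩
      exact absurd (isChain_cons_cons.1 h).1 (Nat.lt_asymm hba)

lemma isFubini_of_perm_range' {n : ℕ} {l : List ℕ} (hl : l ~ range' 1 n) : IsFubini n l := by
  refine ⟨by simp [hl.length_eq], fun x hx => ?_, fun v hv => ?_⟩
  · have := mem_range'_1.1 (hl.subset hx); omega
  · have := mem_range'_1.1 (hl.subset hv)
    rw [hl.countP_eq, countP_lt_range'_one]; omega

lemma perm_map_add_one {n : ℕ} {l : List ℕ} (hl : l ~ range' 1 n) :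
    l.map (· + 1) ~ range' 2 n :=
  range'_succ_left (s := 1) ▸ hl.map _

lemma perm_one_cons_map_add_one {n : ℕ} {l : List ℕ} (hl : l ~ range' 1 n) :
    1 :: l.map (· + 1) ~ range' 1 (n + 1) := by
  rw [range'_succ]
  exact (perm_map_add_one hl).cons 1

lemma perm_zigzag {n : ℕ} {l : List ℕ} (hl : l ~ range' 1 n) :
    1 :: (n + 2) :: l.map (· + 1) ~ range' 1 (n + 2) := by
  rw [range'_succ, range'_concat]
  refine (((perm_map_add_one hl).cons _).trans ?_).cons 1
  simpa [add_comm] using (perm_append_singleton (n + 2) (range' 2 n)).symm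

lemma strictMono_add_one : StrictMono (· + 1 : ℕ → ℕ) := fun _ _ h => Nat.succ_lt_succ h

lemma leadingTerms_weakRuns_one_cons (l : List ℕ) :
    leadingTerms (weakRuns (1 :: l.map (· + 1))) =
      1 :: ((leadingTerms (weakRuns l)).map (· + 1)).tail := by
  cases l with
  | nil => rfl
  | cons b t =>
    rw [← leadingTerms_weakRuns_map strictMono_add_one, map_cons,
      leadingTerms_weakRuns_cons_cons_of_le _ (by omega)]

lemma leadingTerms_weakRuns_zigzag {n b : ℕ} (t : List ℕ) (hb : b ≤ n) :
    leadingTerms (weakRuns (1 :: (n + 2) :: (b :: t).map (· + 1))) =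
      1 :: (leadingTerms (weakRuns (b :: t))).map (· + 1) := by
  rw [← leadingTerms_weakRuns_map strictMono_add_one, map_cons,
    leadingTerms_weakRuns_cons_cons_of_le _ (by omega),
    leadingTerms_weakRuns_cons_cons_of_lt _ (by omega), tail_cons]

def IsFlatPerm (n k : ℕ) (l : List ℕ) : Prop :=
  l ~ range' 1 n ∧ FlattenedWeak l ∧ (weakRuns l).length = k

namespace IsFlatPerm

variable {n k : ℕ} {l : List ℕ}

lemma exists_eq_cons (h : IsFlatPerm n k l) (hn : 0 < n) :
    ∃ b t M, l = b :: t ∧ 1 ≤ b ∧ b ≤ n ∧ leadingTerms (weakRuns l) = b :: M := by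
  obtain _ | ⟨b, t⟩ := l
  · have : 0 = n := by simpa using h.1.length_eq
    omega
  · obtain ⟨M, hM⟩ := leadingTerms_weakRuns_cons b t
    have := mem_range'_1.1 (h.1.subset mem_cons_self)
    exact ⟨b, t, M, rfl, by omega, by omega, hM⟩

lemma zigzag (h : IsFlatPerm n k l) (hn : 0 < n) :
    IsFlatPerm (n + 2) (k + 1) (1 :: (n + 2) :: l.map (· + 1)) := by
  obtain ⟨b, t, M, rfl, hb, hbn, hM⟩ := h.exists_eq_cons hn
  obtain ⟨hperm, hflat, hlen⟩ := h
  have hL := leadingTerms_weakRuns_zigzag t hbn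
  refine ⟨perm_zigzag hperm, ?_, ?_⟩
  · rw [flattenedWeak_iff, hL]
    exact isChain_one_cons_map_add_one hflat (by simp [hM]; omega)
  · rw [← length_leadingTerms, hL, length_cons, length_map, length_leadingTerms, hlen]

lemma one_cons (h : IsFlatPerm n k l) (hn : 0 < n) :
    IsFlatPerm (n + 1) k (1 :: l.map (· + 1)) := by
  obtain ⟨b, t, M, rfl, -, -, hM⟩ := h.exists_eq_cons hn
  obtain ⟨hperm, hflat, hlen⟩ := h
  have hL := leadingTerms_weakRuns_one_cons (b :: t)
  rw [hM, map_cons (l := M), tail_cons] at hL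
  rw [flattenedWeak_iff, hM, isChain_cons] at hflat
  refine ⟨perm_one_cons_map_add_one hperm, ?_, ?_⟩
  · rw [flattenedWeak_iff, hL]
    exact isChain_one_cons_map_add_one hflat.2 fun x hx => (Nat.zero_le b).trans_lt (hflat.1 x hx)
  · rw [← length_leadingTerms, hL, ← hlen, ← length_leadingTerms, hM, length_cons, length_cons,
      length_map]

end IsFlatPerm

lemma exists_isFlatPerm_two_mul_add_one : ∀ j : ℕ, ∃ l, IsFlatPerm (2 * j + 1) (j + 1) l
  | 0 => ⟨[1], Perm.refl _, isChain_singleton 1, rfl⟩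
  | j + 1 =>
    have ⟨l, hl⟩ := exists_isFlatPerm_two_mul_add_one j
    ⟨_, hl.zigzag (by omega)⟩

lemma exists_isFlatPerm {n k : ℕ} (hk : 1 ≤ k) (hkn : 2 * k ≤ n + 1) : ∃ l, IsFlatPerm n k l := by
  obtain ⟨j, rfl⟩ : ∃ j, k = j + 1 := ⟨k - 1, by omega⟩
  obtain ⟨m, rfl⟩ : ∃ m, n = 2 * j + 1 + m := ⟨n - (2 * j + 1), by omega⟩
  clear hk hkn
  induction m with
  | zero => exact exists_isFlatPerm_two_mul_add_one j
  | succ m ih =>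
    obtain ⟨l, hl⟩ := ih
    exact ⟨_, hl.one_cons (by omega)⟩

theorem flat_wruns_exists_iff_general (n k : ℕ) (hk : 1 ≤ k) :
    (∃ l : List ℕ, IsFubini n l ∧ FlattenedWeak l ∧
      (weakRuns l).length = k) ↔ k ≤ (n + 1) / 2 := by
  constructor
  · rintro ⟨l, hF, hfl, rfl⟩
    have := (two_mul_length_weakRuns_le l).2 hfl
    rw [hF.1] at this
    omega
  · intro hkn
    obtain ⟨l, hl, hfl, hlen⟩ := exists_isFlatPerm (n := n) hk (by omega)
    exact ⟨l, isFubini_of_perm_range' hl, hfl, hlen⟩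

theorem flat_wruns_exists_iff (n k : ℕ) (hn : 1 ≤ n) (hk : 1 ≤ k) :
    (∃ l : List ℕ, IsFubini n l ∧ FlattenedWeak l ∧
      (weakRuns l).length = k) ↔ k ≤ (n + 1) / 2 :=
  flat_wruns_exists_iff_general n k hk
end

section
/- For any composition a = (a_1,...,a_k) of n with all positive parts and a_1 ≥ 2, the number of weakly flattened Fubini rankings of length n with runs of weak ascents, with reduced content a, whose last entry equals 1, is the product over i = 2,...,k of binomial(a_1 + a_i - 2, a_i). -/
/-!
The leading term of the last run of weak ascents is at most the last entry `1`; as the leading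
terms weakly increase and all entries are positive, every run starts with `1`. So the rankings
counted are the words `1 w₁ 1 w₂ ⋯ 1 w_{a₁-1} 1` in which each `w_j` is weakly increasing and free
of `1`. A Fubini ranking with reduced content `a` takes the value `1 + a₁ + ⋯ + a_{i-1}` exactly
`a_i` times, so such a word is determined by how many of the `a_i` copies of each value above `1`
go into each of the `a₁ - 1` gaps, and there are `(a₁ + a_i - 2).choose a_i` ways to distribute
them.
-/

namespace FubiniRanking

open List Function

section Runs

variable (R : ℕ → ℕ → Bool)

def runHeads : ℕ → List ℕ → List ℕ
  | _, [] => []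
  | a, b :: l => if R a b then runHeads b l else b :: runHeads b l

theorem exists_runsAux_eq_cons : ∀ (a : ℕ) (l : List ℕ), ∃ r rest, runsAux R a l = (a :: r) :: rest
  | a, [] => ⟨[], [], rfl⟩
  | a, b :: l => by
    obtain ⟨r, rest, h⟩ := exists_runsAux_eq_cons b l
    by_cases hab : R a b
    · exact ⟨b :: r, rest, by simp [runsAux, h, hab]⟩
    · exact ⟨[], (b :: r) :: rest, by simp [runsAux, h, hab]⟩

theorem leadingTerms_runsAux :
    ∀ (a : ℕ) (l : List ℕ), leadingTerms (runsAux R a l) = a :: runHeads R a l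
  | a, [] => rfl
  | a, b :: l => by
    obtain ⟨r, rest, h⟩ := exists_runsAux_eq_cons R b l
    have ih := leadingTerms_runsAux b l
    rw [h] at ih
    simp only [leadingTerms, map_cons, headI_cons, cons.injEq, true_and] at ih
    by_cases hab : R a b <;> simp [runsAux, runHeads, h, hab, leadingTerms, ih]

variable {R}

theorem mem_of_mem_runHeads : ∀ {a : ℕ} {l : List ℕ} {y : ℕ}, y ∈ runHeads R a l → y ∈ l
  | _, [], _, h => by simp [runHeads] at h
  | a, b :: l, y, h => by
    unfold runHeads at h
    split_ifs at h
    · exact mem_cons_of_mem _ (mem_of_mem_runHeads h)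
    · rcases mem_cons.mp h with rfl | h
      · exact mem_cons_self
      · exact mem_cons_of_mem _ (mem_of_mem_runHeads h)

end Runs

local notation "weakRunHeads" => runHeads fun x y => decide (x ≤ y)

theorem getLast_cons_mono {α : Type*} [Preorder α] {a b : α} (hab : a ≤ b) (l : List α) :
    (a :: l).getLast (cons_ne_nil _ _) ≤ (b :: l).getLast (cons_ne_nil _ _) := by
  cases l <;> simp [hab]

theorem getLast_cons_weakRunHeads_le : ∀ (a : ℕ) (l : List ℕ),
    (a :: weakRunHeads a l).getLast (cons_ne_nil _ _) ≤ (a :: l).getLast (cons_ne_nil _ _)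
  | a, [] => le_rfl
  | a, b :: l => by
    have ih := getLast_cons_weakRunHeads_le b l
    rw [getLast_cons (cons_ne_nil _ _)]
    by_cases hab : a ≤ b
    · simp only [runHeads, hab, decide_true, if_true]
      exact le_trans (getLast_cons_mono hab _) ih
    · simpa [runHeads, hab, getLast_cons] using ih

def WeakAscOrOne (x y : ℕ) : Prop := x ≤ y ∨ y = 1

theorem isChain_weakAscOrOne_cons_iff :
    ∀ (a : ℕ) (l : List ℕ), IsChain WeakAscOrOne (a :: l) ↔ ∀ y ∈ weakRunHeads a l, y = 1
  | a, [] => by simp [runHeads]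
  | a, b :: l => by
    rw [isChain_cons_cons, isChain_weakAscOrOne_cons_iff b l]
    by_cases hab : a ≤ b <;> simp [runHeads, WeakAscOrOne, hab]

theorem weaklyFlattenedWeak_iff {l : List ℕ} (hl : ∀ x ∈ l, 0 < x) (hlast : l.getLast? = some 1) :
    WeaklyFlattenedWeak l ↔ l.head? = some 1 ∧ IsChain WeakAscOrOne l := by
  obtain _ | ⟨a, l⟩ := l
  · simp at hlast
  have hlast' : (a :: l).getLast (cons_ne_nil _ _) = 1 := by
    simpa [getLast?_eq_some_getLast (cons_ne_nil a l)] using hlast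
  have heads : leadingTerms (weakRuns (a :: l)) = a :: weakRunHeads a l :=
    leadingTerms_runsAux _ a l
  rw [WeaklyFlattenedWeak, heads, isChain_weakAscOrOne_cons_iff, head?_cons, Option.some_inj]
  constructor
  · intro hchain
    have hall : ∀ x ∈ a :: weakRunHeads a l, x = 1 := by
      intro x hx
      have hle := (isChain_iff_pairwise.mp hchain).rel_getLast hx
      have hpos : 0 < x := hl x (by
        rcases mem_cons.mp hx with rfl | hx
        exacts [mem_cons_self, mem_cons_of_mem _ (mem_of_mem_runHeads hx)])
      have := getLast_cons_weakRunHeads_le a l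
      omega
    exact ⟨hall a mem_cons_self, fun y hy => hall y (mem_cons_of_mem _ hy)⟩
  · rintro ⟨rfl, hheads⟩
    have : 1 :: weakRunHeads 1 l = replicate (weakRunHeads 1 l).length.succ 1 :=
      eq_replicate_iff.mpr ⟨rfl, by simpa using hheads⟩
    rw [this]
    exact isChain_replicate_of_rel _ le_rfl

def joinOnes : List (List ℕ) → List ℕ
  | [] => [1]
  | w :: ws => 1 :: (w ++ joinOnes ws)

theorem exists_joinOnes_eq_cons : ∀ ws : List (List ℕ), ∃ r, joinOnes ws = 1 :: r
  | [] => ⟨[], rfl⟩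
  | w :: ws => ⟨w ++ joinOnes ws, rfl⟩

@[simp] theorem head?_joinOnes (ws : List (List ℕ)) : (joinOnes ws).head? = some 1 := by
  obtain ⟨r, hr⟩ := exists_joinOnes_eq_cons ws
  simp [hr]

@[simp] theorem getLast?_joinOnes : ∀ ws : List (List ℕ), (joinOnes ws).getLast? = some 1
  | [] => rfl
  | w :: ws => by
    obtain ⟨r, hr⟩ := exists_joinOnes_eq_cons ws
    rw [joinOnes, ← cons_append, getLast?_append_of_ne_nil _ (by simp [hr]), getLast?_joinOnes]

theorem mem_joinOnes {x : ℕ} : ∀ {ws : List (List ℕ)}, x ∈ joinOnes ws ↔ x = 1 ∨ ∃ w ∈ ws, x ∈ w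
  | [] => by simp [joinOnes]
  | w :: ws => by
    simp only [joinOnes, mem_cons, mem_append, mem_joinOnes, exists_eq_or_imp]
    tauto

theorem count_one_joinOnes : ∀ {ws : List (List ℕ)}, (∀ w ∈ ws, 1 ∉ w) →
    (joinOnes ws).count 1 = ws.length + 1
  | [], _ => rfl
  | w :: ws, h => by
    rw [joinOnes, count_cons_self, count_append, count_eq_zero.mpr (h w mem_cons_self),
      count_one_joinOnes fun w hw => h w (mem_cons_of_mem _ hw), length_cons]
    omega

theorem count_joinOnes {x : ℕ} (hx : x ≠ 1) :
    ∀ ws : List (List ℕ), (joinOnes ws).count x = (ws.map (count x)).sum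
  | [] => by simp [joinOnes, Ne.symm hx]
  | w :: ws => by simp [joinOnes, Ne.symm hx, count_joinOnes hx ws]

theorem append_cons_inj_of_notMem {α : Type*} [DecidableEq α] {x : α} {w w' r r' : List α}
    (hw : x ∉ w) (hw' : x ∉ w') (h : w ++ x :: r = w' ++ x :: r') : w = w' ∧ r = r' := by
  have hlen : w.length = w'.length := by
    simpa [idxOf_append_of_notMem hw, idxOf_append_of_notMem hw'] using congrArg (idxOf x) h
  obtain ⟨hww, hrr⟩ := append_inj h hlen
  exact ⟨hww, (cons_inj_right x).mp hrr⟩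

theorem joinOnes_inj : ∀ {ws ws' : List (List ℕ)}, (∀ w ∈ ws, 1 ∉ w) → (∀ w ∈ ws', 1 ∉ w) →
    joinOnes ws = joinOnes ws' → ws = ws'
  | [], [], _, _, _ => rfl
  | [], w' :: ws', _, _, h | w' :: ws', [], _, _, h => by
    obtain ⟨r, hr⟩ := exists_joinOnes_eq_cons ws'
    simp [joinOnes, hr] at h
  | w :: ws, w' :: ws', h1, h1', h => by
    obtain ⟨r, hr⟩ := exists_joinOnes_eq_cons ws
    obtain ⟨r', hr'⟩ := exists_joinOnes_eq_cons ws'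
    simp only [joinOnes, hr, hr', cons.injEq, true_and] at h
    obtain ⟨rfl, hrr⟩ := append_cons_inj_of_notMem (h1 w mem_cons_self) (h1' w' mem_cons_self) h
    rw [joinOnes_inj (fun u hu => h1 u (mem_cons_of_mem _ hu))
      (fun u hu => h1' u (mem_cons_of_mem _ hu)) (by rw [hr, hr', hrr])]

theorem isChain_weakAscOrOne_joinOnes : ∀ {ws : List (List ℕ)},
    (∀ w ∈ ws, w.SortedLE ∧ ∀ x ∈ w, 0 < x) → IsChain WeakAscOrOne (joinOnes ws)
  | [], _ => by simp [joinOnes]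
  | w :: ws, h => by
    obtain ⟨hw, hpos⟩ := h w mem_cons_self
    have hchain : IsChain (· ≤ ·) (1 :: w) := by
      cases w with
      | nil => simp
      | cons y w => exact hw.isChain.cons_cons (hpos y mem_cons_self)
    rw [joinOnes, ← cons_append, isChain_append]
    refine ⟨hchain.imp fun _ _ => Or.inl,
      isChain_weakAscOrOne_joinOnes fun v hv => h v (mem_cons_of_mem _ hv), ?_⟩
    simp only [head?_joinOnes, Option.mem_some_iff]
    exact fun _ _ y hy => Or.inr hy.symm

theorem exists_eq_append_joinOnes : ∀ {l : List ℕ}, IsChain WeakAscOrOne l →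
    l.getLast? = some 1 →
    ∃ w ws, l = w ++ joinOnes ws ∧ ∀ v ∈ w :: ws, v.SortedLE ∧ 1 ∉ v
  | [], _, h => by simp at h
  | [x], _, h => ⟨[], [], by simpa [joinOnes] using h, by simp [sortedLE_iff_isChain]⟩
  | x :: y :: l, hc, hlast => by
    obtain ⟨w, ws, hl, hv⟩ := exists_eq_append_joinOnes (l := y :: l) hc.tail (by simpa using hlast)
    by_cases hx : x = 1
    · refine ⟨[], w :: ws, by simp [joinOnes, hx, hl], ?_⟩
      simpa [sortedLE_iff_isChain] using hv
    · refine ⟨x :: w, ws, by simp [hl], ?_⟩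
      simp only [forall_mem_cons] at hv ⊢
      refine ⟨⟨?_, by simpa [Ne.symm hx] using hv.1.2⟩, hv.2⟩
      cases w with
      | nil => simp [sortedLE_iff_isChain]
      | cons z w =>
        obtain ⟨rfl, -⟩ : y = z ∧ _ := by simpa using hl
        have hxy : WeakAscOrOne x y := (isChain_cons_cons.mp hc).1
        have hxy' : x ≤ y := hxy.resolve_right fun h => hv.1.2 (h ▸ mem_cons_self)
        exact (hv.1.1.isChain.cons_cons hxy').sortedLE

theorem weaklyFlattenedWeak_and_getLast?_eq_one_iff {l : List ℕ} (hl : ∀ x ∈ l, 0 < x) :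
    WeaklyFlattenedWeak l ∧ l.getLast? = some 1 ↔
      ∃ ws, l = joinOnes ws ∧ ∀ w ∈ ws, w.SortedLE ∧ 1 ∉ w := by
  constructor
  · rintro ⟨hwf, hlast⟩
    obtain ⟨hhead, hchain⟩ := (weaklyFlattenedWeak_iff hl hlast).mp hwf
    obtain ⟨w, ws, rfl, hv⟩ := exists_eq_append_joinOnes hchain hlast
    obtain rfl : w = [] := by
      cases w with
      | nil => rfl
      | cons z w => simp_all
    exact ⟨ws, rfl, fun v hv' => hv v (mem_cons_of_mem _ hv')⟩
  · rintro ⟨ws, rfl, hws⟩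
    refine ⟨(weaklyFlattenedWeak_iff hl (getLast?_joinOnes ws)).mpr
      ⟨head?_joinOnes ws, isChain_weakAscOrOne_joinOnes fun w hw => ⟨(hws w hw).1, ?_⟩⟩,
      getLast?_joinOnes ws⟩
    exact fun x hx => hl x (mem_joinOnes.mpr (Or.inr ⟨w, hw, hx⟩))

theorem countP_mem_eq_sum_map_count {α : Type*} [DecidableEq α] {L : List α} (hL : L.Nodup)
    (l : List α) : l.countP (· ∈ L) = (L.map l.count).sum := by
  rw [← sum_toFinset _ hL, countP_eq_length_filter, ← Multiset.coe_card,
    ← Multiset.sum_count_eq_card (s := L.toFinset) (by simp)]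
  refine Finset.sum_congr rfl fun x hx => ?_
  rw [Multiset.coe_count, count_filter]
  simp_all

theorem countP_lt_getElem {α : Type*} [LinearOrder α] {L l : List α} (hL : L.SortedLT)
    (hl : ∀ x ∈ l, x ∈ L) {j : ℕ} (hj : j < L.length) :
    l.countP (· < L[j]) = ((L.take j).map l.count).sum := by
  rw [← countP_mem_eq_sum_map_count (hL.nodup.sublist (take_sublist j L))]
  refine countP_congr fun x hx => ?_
  obtain ⟨i, hi, rfl⟩ := getElem_of_mem (hl x hx)
  simp only [decide_eq_true_eq, mem_take_iff_getElem, hL.nodup.getElem_inj_iff,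
    hL.getElem_lt_getElem_iff]
  exact ⟨fun hij => ⟨i, by omega, rfl⟩, fun ⟨_, _, rfl⟩ => by omega⟩

def level (a : List ℕ) (i : ℕ) : ℕ := 1 + (a.take i).sum

def levels (a : List ℕ) : List ℕ := ofFn fun i : Fin a.length => level a i

section Levels

variable {a : List ℕ}

@[simp] theorem length_levels : (levels a).length = a.length := length_ofFn

@[simp] theorem getElem_levels {i : ℕ} (hi : i < (levels a).length) :
    (levels a)[i] = level a i := List.getElem_ofFn ..

theorem levels_cons (c : ℕ) (t : List ℕ) :
    levels (c :: t) = 1 :: ofFn fun i : Fin t.length => level (c :: t) (i + 1) := by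
  simp [levels, ofFn_succ, level]

theorem level_lt_level_succ (ha : ∀ x ∈ a, 0 < x) {i : ℕ} (hi : i < a.length) :
    level a i < level a (i + 1) := by
  have := ha _ (getElem_mem hi)
  simp only [level, sum_take_succ _ _ hi]
  omega

theorem level_mono {i j : ℕ} (hij : i ≤ j) : level a i ≤ level a j :=
  Nat.add_le_add_left ((take_sublist_take_left hij).sum_le_sum fun _ _ => Nat.zero_le _) 1

theorem level_lt_level (ha : ∀ x ∈ a, 0 < x) {i j : ℕ} (hij : i < j) (hj : j ≤ a.length) :
    level a i < level a j :=
  (level_lt_level_succ ha (by omega)).trans_le (level_mono hij)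

theorem sortedLT_levels (ha : ∀ x ∈ a, 0 < x) : (levels a).SortedLT :=
  sortedLT_ofFn_iff.mpr fun _ j hij => level_lt_level ha hij j.isLt.le

theorem one_le_of_mem_levels {x : ℕ} (hx : x ∈ levels a) : 1 ≤ x := by
  obtain ⟨i, rfl⟩ := mem_ofFn.mp hx
  simp [level]

theorem le_sum_of_mem_levels (ha : ∀ x ∈ a, 0 < x) {x : ℕ} (hx : x ∈ levels a) : x ≤ a.sum := by
  obtain ⟨i, rfl⟩ := mem_ofFn.mp hx
  have hlt := level_lt_level_succ ha i.isLt
  have hle : level a (i + 1) ≤ 1 + a.sum :=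
    Nat.add_le_add_left ((take_sublist _ a).sum_le_sum fun _ _ => Nat.zero_le _) 1
  omega

end Levels

theorem sort_toFinset_eq_levels {n : ℕ} {a l : List ℕ} (hl : IsFubini n l)
    (hrc : reducedContent l = a) : l.toFinset.sort (· ≤ ·) = levels a := by
  set s := l.toFinset.sort (· ≤ ·)
  have hs : s.SortedLT := Finset.sortedLT_sort _
  have hmem : ∀ x ∈ l, x ∈ s := fun x hx => by simpa [s] using hx
  have hcount : s.map l.count = a := hrc
  refine ext_getElem (by simp [← hcount]) fun j hj _ => ?_
  have hj' : s[j] ∈ l := mem_toFinset.mp (Finset.mem_sort _ |>.mp (getElem_mem hj))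
  rw [hl.2.2 _ hj',
    countP_lt_getElem hs hmem hj, map_take, hcount, getElem_levels, level]

section CountLevels

variable {a l : List ℕ} (ha : ∀ x ∈ a, 0 < x) (hmem : ∀ x ∈ l, x ∈ levels a)
  (hcount : (levels a).map l.count = a)
include ha hmem hcount

theorem isFubini_of_map_count_levels : IsFubini a.sum l := by
  have hs := sortedLT_levels ha
  refine ⟨?_, fun x hx => ⟨one_le_of_mem_levels (hmem x hx), le_sum_of_mem_levels ha (hmem x hx)⟩,
    fun v hv => ?_⟩
  · rw [← hcount, ← countP_mem_eq_sum_map_count hs.nodup, countP_eq_length.mpr (by simpa)]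
  · obtain ⟨j, hj, rfl⟩ := getElem_of_mem (hmem v hv)
    rw [countP_lt_getElem hs hmem hj, map_take, hcount, getElem_levels, level]

theorem reducedContent_of_map_count_levels : reducedContent l = a := by
  have hsort : l.toFinset.sort (· ≤ ·) = levels a := by
    refine (Finset.sortedLT_sort _).eq_of_mem_iff (sortedLT_levels ha) fun x => ?_
    rw [Finset.mem_sort, mem_toFinset]
    have hpos (hx : x ∈ levels a) : 0 < l.count x := ha _ (hcount ▸ mem_map_of_mem hx)
    exact ⟨hmem x, fun hx => count_pos_iff.mp (hpos hx)⟩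
  rw [reducedContent, hsort, hcount]

end CountLevels

theorem isFubini_and_reducedContent_eq_iff {a : List ℕ} (ha : ∀ x ∈ a, 0 < x) {l : List ℕ} :
    IsFubini a.sum l ∧ reducedContent l = a ↔
      (∀ x ∈ l, x ∈ levels a) ∧ (levels a).map l.count = a := by
  constructor
  · rintro ⟨hl, hrc⟩
    have hsort := sort_toFinset_eq_levels hl hrc
    refine ⟨fun x hx => ?_, ?_⟩
    · rw [← hsort, Finset.mem_sort, mem_toFinset]
      exact hx
    · rw [← hsort]
      exact hrc
  · rintro ⟨hmem, hcount⟩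
    exact ⟨isFubini_of_map_count_levels ha hmem hcount,
      reducedContent_of_map_count_levels ha hmem hcount⟩

section GapWord

variable {k : ℕ} {v : Fin k → ℕ}

def gapWord (v c : Fin k → ℕ) : List ℕ := (ofFn fun i => replicate (c i) (v i)).flatten

theorem mem_range_of_mem_gapWord {c : Fin k → ℕ} {x : ℕ} (hx : x ∈ gapWord v c) :
    x ∈ Set.range v := by
  obtain ⟨_, hw, hx⟩ := mem_flatten.mp hx
  obtain ⟨i, rfl⟩ := mem_ofFn.mp hw
  exact ⟨i, (eq_of_mem_replicate hx).symm⟩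

theorem count_gapWord (hv : Injective v) (c : Fin k → ℕ) (i : Fin k) :
    (gapWord v c).count (v i) = c i := by
  simp [gapWord, count_flatten, map_ofFn, sum_ofFn, count_replicate, hv.eq_iff]

theorem sortedLE_gapWord (hv : Monotone v) (c : Fin k → ℕ) : (gapWord v c).SortedLE := by
  refine sortedLE_iff_pairwise.mpr (pairwise_flatten.mpr ⟨?_, pairwise_ofFn.mpr ?_⟩)
  · simp [pairwise_replicate]
  · intro i j hij x hx y hy
    rw [eq_of_mem_replicate hx, eq_of_mem_replicate hy]
    exact hv hij.le

theorem gapWord_count (hv : StrictMono v) {w : List ℕ} (hw : w.SortedLE)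
    (hwv : ∀ x ∈ w, x ∈ Set.range v) : gapWord v (fun i => w.count (v i)) = w := by
  refine Perm.eq_of_sortedLE (sortedLE_gapWord hv.monotone _) hw (perm_iff_count.mpr fun x => ?_)
  by_cases hx : x ∈ Set.range v
  · obtain ⟨i, rfl⟩ := hx
    exact count_gapWord hv.injective _ i
  · rw [count_eq_zero.mpr (hx ∘ mem_range_of_mem_gapWord), count_eq_zero.mpr (hx ∘ hwv x)]

variable (v) in
/-- `c i j` is the number of copies of `v i` put into the `j`-th of the `m` gaps between
`m + 1` ones. -/
def fillGaps (m : ℕ) (c : Fin k → Fin m → ℕ) : List ℕ :=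
  joinOnes (ofFn fun j => gapWord v (c · j))

theorem one_notMem_gapWord (hv1 : ∀ i, 1 < v i) (c : Fin k → ℕ) : 1 ∉ gapWord v c := fun h => by
  obtain ⟨i, hi⟩ := mem_range_of_mem_gapWord h
  exact (hv1 i).ne' hi

variable (hv : StrictMono v) (hv1 : ∀ i, 1 < v i) (m : ℕ)
include hv1

theorem count_one_fillGaps (c : Fin k → Fin m → ℕ) : (fillGaps v m c).count 1 = m + 1 := by
  rw [fillGaps, count_one_joinOnes (by simpa using fun j => one_notMem_gapWord hv1 _), length_ofFn]

include hv

theorem count_fillGaps (c : Fin k → Fin m → ℕ) (i : Fin k) :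
    (fillGaps v m c).count (v i) = ∑ j, c i j := by
  simp [fillGaps, count_joinOnes (hv1 i).ne', map_ofFn, sum_ofFn, count_gapWord hv.injective]

theorem fillGaps_injective : Injective (fillGaps v m) := by
  intro c c' h
  have hfree : ∀ c : Fin k → Fin m → ℕ, ∀ w ∈ ofFn fun j => gapWord v (c · j), 1 ∉ w := by
    simpa using fun _ j => one_notMem_gapWord hv1 _
  have hws := ofFn_inj.mp (joinOnes_inj (hfree c) (hfree c') h)
  funext i j
  simpa [count_gapWord hv.injective] using congrArg (count (v i)) (congrFun hws j)

theorem setOf_joinOnes_eq_range_fillGaps (s : Fin k → ℕ) :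
    {l | (∃ ws, l = joinOnes ws ∧ ∀ w ∈ ws, w.SortedLE ∧ 1 ∉ w) ∧
        (∀ x ∈ l, x = 1 ∨ x ∈ Set.range v) ∧ l.count 1 = m + 1 ∧ ∀ i, l.count (v i) = s i} =
      Set.range fun c : {c : Fin k → Fin m → ℕ // ∀ i, ∑ j, c i j = s i} => fillGaps v m c := by
  ext l
  constructor
  · rintro ⟨⟨ws, rfl, hws⟩, hmem, hone, hcount⟩
    obtain rfl : ws.length = m := by
      have := count_one_joinOnes fun w hw => (hws w hw).2
      omega
    have hwv : ∀ w ∈ ws, ∀ x ∈ w, x ∈ Set.range v := fun w hw x hx =>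
      (hmem x (mem_joinOnes.mpr (Or.inr ⟨w, hw, hx⟩))).resolve_left
        fun h => (hws w hw).2 (h ▸ hx)
    refine ⟨⟨fun i j => ws[j].count (v i), fun i => ?_⟩, ?_⟩
    · exact (Fin.sum_univ_fun_getElem ws (count (v i))).trans
        ((count_joinOnes (hv1 i).ne' ws).symm.trans (hcount i))
    · conv_rhs => rw [← ofFn_getElem (xs := ws)]
      simp only [fillGaps]
      congr 1
      exact ofFn_inj.mpr (funext fun j => gapWord_count hv (hws _ (getElem_mem _)).1
        (hwv _ (getElem_mem _)))
  · rintro ⟨c, rfl⟩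
    refine ⟨⟨_, rfl, by simpa using fun j => ⟨sortedLE_gapWord hv.monotone _,
      one_notMem_gapWord hv1 _⟩⟩, fun x hx => ?_, count_one_fillGaps hv1 m c,
      fun i => (count_fillGaps hv hv1 m c i).trans (c.2 i)⟩
    obtain rfl | ⟨w, hw, hxw⟩ := mem_joinOnes.mp hx
    · exact Or.inl rfl
    · obtain ⟨j, rfl⟩ := mem_ofFn.mp hw
      exact Or.inr (mem_range_of_mem_gapWord hxw)

end GapWord

theorem card_rowSums (k m : ℕ) (s : Fin k → ℕ) :
    Nat.card {c : Fin k → Fin m → ℕ // ∀ i, ∑ j, c i j = s i} =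
      ∏ i, (m + s i - 1).choose (s i) := by
  rw [Nat.card_congr (Equiv.subtypePiEquivPi (p := fun i (f : Fin m → ℕ) => ∑ j, f j = s i)),
    Nat.card_pi]
  refine Finset.prod_congr rfl fun i _ => ?_
  rw [← Nat.card_congr (Sym.equivNatSumOfFintype (Fin m) (s i)), Nat.card_eq_fintype_card,
    Sym.card_sym_eq_choose, Fintype.card_fin]

theorem map_count_ofFn_eq_iff {t : List ℕ} (v : Fin t.length → ℕ) (l : List ℕ) :
    (ofFn v).map l.count = t ↔ ∀ i, l.count (v i) = t[i] := by
  rw [map_ofFn, ← funext_iff, ← ofFn_inj]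
  simp only [Fin.getElem_fin, ofFn_getElem, Function.comp_def]

theorem isFubini_wflat_endsInOne_iff {c : ℕ} {t : List ℕ} (ha : ∀ x ∈ c :: t, 0 < x)
    {l : List ℕ} :
    IsFubini (c :: t).sum l ∧ WeaklyFlattenedWeak l ∧ reducedContent l = c :: t ∧
        l.getLast? = some 1 ↔
      (∃ ws, l = joinOnes ws ∧ ∀ w ∈ ws, w.SortedLE ∧ 1 ∉ w) ∧
        (∀ x ∈ l, x = 1 ∨ x ∈ Set.range fun i : Fin t.length => level (c :: t) (i + 1)) ∧
        l.count 1 = c ∧ ∀ i : Fin t.length, l.count (level (c :: t) (i + 1)) = t[i] := by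
  have hfub := isFubini_and_reducedContent_eq_iff ha (l := l)
  rw [levels_cons, map_cons, cons.injEq, map_count_ofFn_eq_iff] at hfub
  have hlevels (x : ℕ) : x ∈ 1 :: ofFn (fun i : Fin t.length => level (c :: t) (i + 1)) ↔
      x = 1 ∨ x ∈ Set.range fun i : Fin t.length => level (c :: t) (i + 1) := by
    simp [mem_ofFn, Set.mem_range]
  have hpos (hF : IsFubini (c :: t).sum l) : ∀ x ∈ l, 0 < x := fun x hx => (hF.2.1 x hx).1
  constructor
  · rintro ⟨hF, hW, hR, hL⟩
    obtain ⟨hmem, hone, hcount⟩ := hfub.mp ⟨hF, hR⟩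
    exact ⟨(weaklyFlattenedWeak_and_getLast?_eq_one_iff (hpos hF)).mp ⟨hW, hL⟩,
      fun x hx => (hlevels x).mp (hmem x hx), hone, hcount⟩
  · rintro ⟨hws, hmem, hone, hcount⟩
    obtain ⟨hF, hR⟩ := hfub.mpr ⟨fun x hx => (hlevels x).mpr (hmem x hx), hone, hcount⟩
    obtain ⟨hW, hL⟩ := (weaklyFlattenedWeak_and_getLast?_eq_one_iff (hpos hF)).mpr hws
    exact ⟨hF, hW, hR, hL⟩

end FubiniRanking

open FubiniRanking List in
theorem wflat_wruns_end_in_one_count (n : ℕ) (a : List ℕ)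
    (ha : ∀ x ∈ a, 0 < x) (hsum : a.sum = n) (h1 : 2 ≤ a.headI) :
    {l : List ℕ | IsFubini n l ∧ WeaklyFlattenedWeak l ∧
        reducedContent l = a ∧ l.getLast? = some 1}.ncard =
      ((a.drop 1).map (fun ai => Nat.choose (a.headI + ai - 2) ai)).prod := by
  obtain _ | ⟨c, t⟩ := a
  · simp at h1
  obtain ⟨m, rfl⟩ := Nat.exists_eq_add_one.mpr (ha c mem_cons_self)
  subst hsum
  have hv : StrictMono fun i : Fin t.length => level ((m + 1) :: t) (i + 1) :=
    fun i j hij => level_lt_level ha (by simpa using hij) (by simp)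
  have hv1 (i : Fin t.length) : 1 < level ((m + 1) :: t) (i + 1) :=
    level_lt_level ha i.succ_pos (by simp)
  calc _ = Nat.card {c : Fin t.length → Fin m → ℕ // ∀ i, ∑ j, c i j = t[i]} := by
        simp_rw [isFubini_wflat_endsInOne_iff ha]
        rw [setOf_joinOnes_eq_range_fillGaps hv hv1 m]
        exact Set.ncard_range_of_injective
          ((fillGaps_injective hv hv1 m).comp Subtype.val_injective)
    _ = _ := by
        simp only [card_rowSums, Fin.getElem_fin, drop_one, tail_cons, headI_cons,
          Fin.prod_univ_fun_getElem t fun ai => (m + ai - 1).choose ai]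
        refine congrArg prod (map_congr_left fun ai _ => ?_)
        congr 1
        omega
end
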